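/- arXiv:2302.02889 — 10 statements merged into one kernel-verified Lean document; each statement's English description precedes it below -/
import Mathlib

section
/- Let X be a set and let S : X × X → X × X be any map. Then S is a Pentagon map if and only if τ ∘ S ∘ τ is a reverse-Pentagon map. -/
/-- The map acting as `S` on the first and second factors of `X × X × X`. -/
def map12 {X : Type*} (S : X × X → X × X) : X × X × X → X × X × X :=
  fun p => ((S (p.1, p.2.1)).1, (S (p.1, p.2.1)).2, p.2.2)

/-- The map acting as `S` on the first and third factors of `X × X × X`. -/
def map13 {X : Type*} (S : X × X → X × X) : X × X × X → X × X × X :=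
  fun p => ((S (p.1, p.2.2)).1, p.2.1, (S (p.1, p.2.2)).2)

/-- The map acting as `S` on the second and third factors of `X × X × X`. -/
def map23 {X : Type*} (S : X × X → X × X) : X × X × X → X × X × X :=
  fun p => (p.1, (S (p.2.1, p.2.2)).1, (S (p.2.1, p.2.2)).2)

/-- `S` is a Pentagon map if `S₁₂ ∘ S₁₃ ∘ S₂₃ = S₂₃ ∘ S₁₂`. -/
def IsPentagonMap {X : Type*} (S : X × X → X × X) : Prop :=
  map12 S ∘ map13 S ∘ map23 S = map23 S ∘ map12 S

/-- `S` is a reverse-Pentagon map if `S₂₃ ∘ S₁₃ ∘ S₁₂ = S₁₂ ∘ S₂₃`. -/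
def IsReversePentagonMap {X : Type*} (S : X × X → X × X) : Prop :=
  map23 S ∘ map13 S ∘ map12 S = map12 S ∘ map23 S

/-! Conjugation by the reversal `(x, y, z) ↦ (z, y, x)` exchanges the outer factors of `X × X × X`,
so it carries the legs `S₂₃, S₁₃, S₁₂` of `S` to the legs `₁₂, ₁₃, ₂₃` of `τ ∘ S ∘ τ`. The
reverse-Pentagon equation for `τ ∘ S ∘ τ` is therefore the conjugate of the Pentagon equation
for `S`, and conjugation by a bijection is injective. -/

def reverseTriple (X : Type*) : X × X × X ≃ X × X × X where
  toFun p := (p.2.2, p.2.1, p.1)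
  invFun p := (p.2.2, p.2.1, p.1)
  left_inv _ := rfl
  right_inv _ := rfl

section SwapConj

variable {X : Type*} (S : X × X → X × X)

theorem map12_swap_comp_swap :
    map12 (Prod.swap ∘ S ∘ Prod.swap) = (reverseTriple X).conj (map23 S) :=
  rfl

theorem map13_swap_comp_swap :
    map13 (Prod.swap ∘ S ∘ Prod.swap) = (reverseTriple X).conj (map13 S) :=
  rfl

theorem map23_swap_comp_swap :
    map23 (Prod.swap ∘ S ∘ Prod.swap) = (reverseTriple X).conj (map12 S) :=
  rfl

end SwapConj

/-- A map `S` is a Pentagon map iff `τ ∘ S ∘ τ` is a reverse-Pentagon map. -/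
theorem isPentagonMap_iff_isReversePentagonMap_swap_comp
    {X : Type*} (S : X × X → X × X) :
    IsPentagonMap S ↔ IsReversePentagonMap (Prod.swap ∘ S ∘ Prod.swap) := by
  rw [IsPentagonMap, IsReversePentagonMap, map12_swap_comp_swap, map13_swap_comp_swap,
    map23_swap_comp_swap, ← Equiv.conj_comp, ← Equiv.conj_comp, ← Equiv.conj_comp]
  exact (Equiv.injective _).eq_iff.symm
end

section
/- Let X be a set and let S : X × X → X × X be a bijection. Then S is a Pentagon map if and only if the opposite map S^op := τ ∘ S⁻¹ ∘ τ is a Pentagon map. -/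
/-!
Write `S₁₂, S₁₃, S₂₃` as permutations of `X × X × X`; their inverses are `(S⁻¹)₁₂, (S⁻¹)₁₃, (S⁻¹)₂₃`.
Inverting both sides of the pentagon equation `S₁₂ S₁₃ S₂₃ = S₂₃ S₁₂` shows that `S` is a Pentagon
map iff `S⁻¹` is a reverse-Pentagon map. Conjugating by the reversal `(x, y, z) ↦ (z, y, x)` turns
`T₁₂, T₁₃, T₂₃` into `T'₂₃, T'₁₃, T'₁₂` with `T' = τ ∘ T ∘ τ`, so `T` is a reverse-Pentagon map iff
`τ ∘ T ∘ τ` is a Pentagon map. Apply this to `T = S⁻¹`.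
-/

section Pentagon

variable {X : Type*}

open Equiv

def map12Perm (S : X × X ≃ X × X) : Perm (X × X × X) where
  toFun := map12 S
  invFun := map12 S.symm
  left_inv p := by simp [map12]
  right_inv p := by simp [map12]

def map13Perm (S : X × X ≃ X × X) : Perm (X × X × X) where
  toFun := map13 S
  invFun := map13 S.symm
  left_inv p := by simp [map13]
  right_inv p := by simp [map13]

def map23Perm (S : X × X ≃ X × X) : Perm (X × X × X) where
  toFun := map23 S
  invFun := map23 S.symm
  left_inv p := by simp [map23]
  right_inv p := by simp [map23]

theorem map12Perm_inv (S : X × X ≃ X × X) : (map12Perm S)⁻¹ = map12Perm S.symm := rfl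

theorem map13Perm_inv (S : X × X ≃ X × X) : (map13Perm S)⁻¹ = map13Perm S.symm := rfl

theorem map23Perm_inv (S : X × X ≃ X × X) : (map23Perm S)⁻¹ = map23Perm S.symm := rfl

theorem isPentagonMap_iff_perm (S : X × X ≃ X × X) :
    IsPentagonMap S ↔ map12Perm S * map13Perm S * map23Perm S = map23Perm S * map12Perm S := by
  rw [← Equiv.coe_inj]
  rfl

theorem isReversePentagonMap_iff_perm (S : X × X ≃ X × X) :
    IsReversePentagonMap S ↔
      map23Perm S * map13Perm S * map12Perm S = map12Perm S * map23Perm S := by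
  rw [← Equiv.coe_inj]
  rfl

theorem isPentagonMap_iff_isReversePentagonMap_symm (S : X × X ≃ X × X) :
    IsPentagonMap S ↔ IsReversePentagonMap S.symm := by
  rw [isPentagonMap_iff_perm, isReversePentagonMap_iff_perm, ← inv_inj]
  simp only [mul_inv_rev, map12Perm_inv, map13Perm_inv, map23Perm_inv, mul_assoc]

def tripleReverse : Perm (X × X × X) where
  toFun p := (p.2.2, p.2.1, p.1)
  invFun p := (p.2.2, p.2.1, p.1)
  left_inv _ := rfl
  right_inv _ := rfl

theorem conj_tripleReverse_map12 (T : X × X → X × X) :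
    tripleReverse.conj (map12 T) = map23 (Prod.swap ∘ T ∘ Prod.swap) := rfl

theorem conj_tripleReverse_map13 (T : X × X → X × X) :
    tripleReverse.conj (map13 T) = map13 (Prod.swap ∘ T ∘ Prod.swap) := rfl

theorem conj_tripleReverse_map23 (T : X × X → X × X) :
    tripleReverse.conj (map23 T) = map12 (Prod.swap ∘ T ∘ Prod.swap) := rfl

theorem isReversePentagonMap_iff_isPentagonMap_swap_conj (T : X × X → X × X) :
    IsReversePentagonMap T ↔ IsPentagonMap (Prod.swap ∘ T ∘ Prod.swap) := by
  rw [IsReversePentagonMap, IsPentagonMap, ← tripleReverse.conj.injective.eq_iff]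
  simp only [conj_comp, conj_tripleReverse_map12, conj_tripleReverse_map13,
    conj_tripleReverse_map23]

end Pentagon

/-- A bijection `S` is a Pentagon map iff the opposite map `S^op = τ ∘ S⁻¹ ∘ τ`
is a Pentagon map. -/
theorem isPentagonMap_iff_isPentagonMap_op
    {X : Type*} (S : (X × X) ≃ (X × X)) :
    IsPentagonMap (⇑S) ↔ IsPentagonMap (Prod.swap ∘ ⇑S.symm ∘ Prod.swap) :=
  (isPentagonMap_iff_isReversePentagonMap_symm S).trans
    (isReversePentagonMap_iff_isPentagonMap_swap_conj S.symm)
end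

section
/- Let X be a set, let S⁽¹⁾, S⁽²⁾, S⁽³⁾, S⁽⁴⁾, S⁽⁵⁾ : X × X → X × X satisfy the entwining Pentagon relation S⁽¹⁾₁₂ ∘ S⁽³⁾₁₃ ∘ S⁽⁵⁾₂₃ = S⁽⁴⁾₂₃ ∘ S⁽²⁾₁₂, and let χ, ψ : X → X be arbitrary maps (boundary maps). Define Q⁽¹⁾ := (χ × id) ∘ S⁽¹⁾, Q⁽²⁾ := (χ × id) ∘ S⁽²⁾, Q⁽⁴⁾ := S⁽⁴⁾ ∘ (id × ψ), Q⁽⁵⁾ := S⁽⁵⁾ ∘ (id × ψ). Then the entwining Pentagon relation Q⁽¹⁾₁₂ ∘ S⁽³⁾₁₃ ∘ Q⁽⁵⁾₂₃ = Q⁽⁴⁾₂₃ ∘ Q⁽²⁾₁₂ holds. -/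
/-- Composing an entwining Pentagon quintuple with boundary maps `χ, ψ` again yields
an entwining Pentagon relation. -/
theorem entwining_pentagon_boundary
    {X : Type*} (S1 S2 S3 S4 S5 : X × X → X × X) (χ ψ : X → X)
    (h : map12 S1 ∘ map13 S3 ∘ map23 S5 = map23 S4 ∘ map12 S2) :
    map12 (Prod.map χ id ∘ S1) ∘ map13 S3 ∘ map23 (S5 ∘ Prod.map id ψ) =
      map23 (S4 ∘ Prod.map id ψ) ∘ map12 (Prod.map χ id ∘ S2) := by
  -- `χ` only acts on the first factor, which `S⁽⁴⁾₂₃` does not see, and `ψ` only on the third,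
  -- which `S⁽²⁾₁₂` does not see; so both sides are the old ones conjugated, definitionally.
  change Prod.map χ id ∘ (map12 S1 ∘ map13 S3 ∘ map23 S5) ∘ Prod.map id (Prod.map id ψ) =
    Prod.map χ id ∘ (map23 S4 ∘ map12 S2) ∘ Prod.map id (Prod.map id ψ)
  rw [h]
end

section
/- The homogeneous normalization map φ is a Pentagon map: for all x = (x¹,x²), y = (y¹,y²), z = (z¹,z²) in D × D such that y² + y¹x² ≠ 0, z² + z¹y² ≠ 0 and z² + z¹(y² + y¹x²) ≠ 0, one has φ₁₂(φ₁₃(φ₂₃(x,y,z))) = φ₂₃(φ₁₂(x,y,z)). -/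
variable {D : Type*} [DivisionRing D]

/-- The homogeneous normalization map `φ`. -/
def normMap : (D × D) × (D × D) → (D × D) × (D × D) :=
  fun ⟨⟨x1, x2⟩, ⟨y1, y2⟩⟩ =>
    ((x1 - x2 * (y2 + y1 * x2)⁻¹ * (y1 * x1), x2 * (y2 + y1 * x2)⁻¹),
     (y1 * x1, y2 + y1 * x2))

/-!
Read a pair `x` as the matrix `U x = !![x.1, x.2; 0, 1]` and a pair `u` as `L u = !![1, 0; u.1, u.2]`.
Then `normMap (x, y) = (u, v)` says `U v = U y * U x` and `L x = L u * L v`: `v` is a product and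
`u = x / v` a quotient. The third factors of the two sides of the pentagon equation agree by
associativity of the `U`-product, the second ones by an identity mixing the two products, and the
first ones by the group identity `(x / w) / (q / w) = x / q`.
-/

namespace NormMap

section Semiring

variable {R : Type*} [Semiring R]

def upperMul (y x : R × R) : R × R := (y.1 * x.1, y.2 + y.1 * x.2)

def lowerMul (u v : R × R) : R × R := (u.1 + u.2 * v.1, u.2 * v.2)

theorem upperMul_assoc (z y x : R × R) :
    upperMul (upperMul z y) x = upperMul z (upperMul y x) := by
  simp only [upperMul, mul_add, mul_assoc, add_assoc]

theorem lowerMul_assoc (u v w : R × R) :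
    lowerMul (lowerMul u v) w = lowerMul u (lowerMul v w) := by
  simp only [lowerMul, mul_add, mul_assoc, add_assoc]

theorem lowerMul_upperMul_upperMul {u v x x' : R × R} (hx : lowerMul x' (upperMul v x) = x) :
    lowerMul (upperMul u x') (upperMul v x) = upperMul (lowerMul u v) x := by
  obtain ⟨hx₁, hx₂⟩ := Prod.ext_iff.mp hx
  simp only [lowerMul, upperMul] at hx₁ hx₂ ⊢
  refine Prod.ext ?_ ?_
  · calc u.1 * x'.1 + (u.2 + u.1 * x'.2) * (v.1 * x.1)
        _ = u.1 * (x'.1 + x'.2 * (v.1 * x.1)) + u.2 * (v.1 * x.1) := by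
          simp only [mul_add, add_mul, mul_assoc]; abel
        _ = (u.1 + u.2 * v.1) * x.1 := by rw [hx₁, add_mul, mul_assoc]
  · calc (u.2 + u.1 * x'.2) * (v.2 + v.1 * x.2)
        _ = u.2 * (v.2 + v.1 * x.2) + u.1 * (x'.2 * (v.2 + v.1 * x.2)) := by
          rw [add_mul, mul_assoc]
        _ = u.2 * v.2 + (u.1 + u.2 * v.1) * x.2 := by
          rw [hx₂]; simp only [mul_add, add_mul, mul_assoc]; abel

end Semiring

def lowerDiv (x v : D × D) : D × D := (x.1 - x.2 * v.2⁻¹ * v.1, x.2 * v.2⁻¹)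

theorem lowerDiv_lowerMul_cancel (x : D × D) {v : D × D} (hv : v.2 ≠ 0) :
    lowerMul (lowerDiv x v) v = x := by
  simp only [lowerDiv, lowerMul, inv_mul_cancel_right₀ hv, sub_add_cancel]

theorem eq_lowerDiv_of_lowerMul_eq {u v x : D × D} (hv : v.2 ≠ 0) (h : lowerMul u v = x) :
    u = lowerDiv x v := by
  subst h
  simp only [lowerDiv, lowerMul, mul_inv_cancel_right₀ hv, add_sub_cancel_right]

theorem lowerDiv_lowerMul_lowerDiv (x : D × D) {q w : D × D} (hq : q.2 ≠ 0) (hw : w.2 ≠ 0) :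
    lowerMul (lowerDiv x q) (lowerDiv q w) = lowerDiv x w :=
  eq_lowerDiv_of_lowerMul_eq hw <| by
    rw [lowerMul_assoc, lowerDiv_lowerMul_cancel q hw, lowerDiv_lowerMul_cancel x hq]

theorem lowerDiv_lowerDiv_lowerDiv_cancel_right (x : D × D) {q w : D × D} (hq : q.2 ≠ 0)
    (hw : w.2 ≠ 0) : lowerDiv (lowerDiv x w) (lowerDiv q w) = lowerDiv x q :=
  (eq_lowerDiv_of_lowerMul_eq (mul_ne_zero hq (inv_ne_zero hw))
    (lowerDiv_lowerMul_lowerDiv x hq hw)).symm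

theorem normMap_eq (x y : D × D) :
    normMap (x, y) = (lowerDiv x (upperMul y x), upperMul y x) :=
  rfl

end NormMap

open NormMap in
/-- The homogeneous normalization map is a Pentagon map. -/
theorem normMap_pentagon (x1 x2 y1 y2 z1 z2 : D)
    (h1 : y2 + y1 * x2 ≠ 0) (h2 : z2 + z1 * y2 ≠ 0)
    (h3 : z2 + z1 * (y2 + y1 * x2) ≠ 0) :
    map12 normMap (map13 normMap (map23 normMap ((x1, x2), (y1, y2), (z1, z2)))) =
      map23 normMap (map12 normMap ((x1, x2), (y1, y2), (z1, z2))) := by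
  set x : D × D := (x1, x2)
  set y : D × D := (y1, y2)
  set z : D × D := (z1, z2)
  set q := upperMul y x
  set w := upperMul z q
  have hq₂ : q.2 ≠ 0 := h1
  have hzy₂ : (upperMul z y).2 ≠ 0 := h2
  have hw₂ : w.2 ≠ 0 := h3
  have hw : upperMul (upperMul z y) x = w := upperMul_assoc z y x
  have hq : upperMul (lowerDiv y (upperMul z y)) (lowerDiv x w) = lowerDiv q w := by
    refine eq_lowerDiv_of_lowerMul_eq hw₂ ?_
    rw [← hw, lowerMul_upperMul_upperMul (hw ▸ lowerDiv_lowerMul_cancel x hw₂),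
      lowerDiv_lowerMul_cancel y hzy₂]
  simp only [map12, map13, map23, normMap_eq, hw, hq,
    lowerDiv_lowerDiv_lowerDiv_cancel_right x hq₂ hw₂]
  rfl
end

section
/- The matrix re-factorization problem A¹(u)A²(v) = A²(y)A¹(x) of 2×2 matrices over D is equivalent to the homogeneous normalization map: for x = (x¹,x²), y = (y¹,y²) in D × D with y² + y¹x² ≠ 0, the pair (u,v) = φ(x,y) satisfies A¹(u)A²(v) = A²(y)A¹(x); conversely, if (u,v) with v² ≠ 0 satisfies A¹(u)A²(v) = A²(y)A¹(x), then (u,v) = φ(x,y). -/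
/-! Since `A¹(u)A²(v)` has second row `v`, the refactorization determines `v` outright; then
`u² = x² (v²)⁻¹` comes from the `(1,2)` entry and `u¹ = x¹ - u² v¹` from the `(1,1)` entry,
which is the formula defining `φ`. -/

variable {D : Type*} [DivisionRing D]

/-- The matrix `A¹(x)`: the identity with first row replaced by `(x¹, x²)`. -/
def A1 (x : D × D) : Matrix (Fin 2) (Fin 2) D := !![x.1, x.2; 0, 1]

/-- The matrix `A²(x)`: the identity with second row replaced by `(x¹, x²)`. -/
def A2 (x : D × D) : Matrix (Fin 2) (Fin 2) D := !![1, 0; x.1, x.2]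

theorem A1_mul_A2 (u v : D × D) :
    A1 u * A2 v = !![u.1 + u.2 * v.1, u.2 * v.2; v.1, v.2] := by
  simp [A1, A2]

theorem A2_mul_A1 (y x : D × D) :
    A2 y * A1 x = !![x.1, x.2; y.1 * x.1, y.1 * x.2 + y.2] := by
  simp [A1, A2]

/-- The `2 × 2` re-factorization problem `A¹(u)A²(v) = A²(y)A¹(x)` is equivalent to the
homogeneous normalization map `φ`. -/
theorem refactorization_iff_normMap (x y : D × D) :
    (y.2 + y.1 * x.2 ≠ 0 →
      A1 (normMap (x, y)).1 * A2 (normMap (x, y)).2 = A2 y * A1 x) ∧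
    (∀ u v : D × D, v.2 ≠ 0 → A1 u * A2 v = A2 y * A1 x → (u, v) = normMap (x, y)) := by
  obtain ⟨x1, x2⟩ := x
  obtain ⟨y1, y2⟩ := y
  simp only [A1_mul_A2, A2_mul_A1, EmbeddingLike.apply_eq_iff_eq, Matrix.vecCons_inj, and_true]
  constructor
  · intro hw
    simp [normMap, inv_mul_cancel_right₀ hw, add_comm]
  · rintro ⟨u1, u2⟩ ⟨v1, v2⟩ hv ⟨⟨h11, h12⟩, rfl, rfl⟩
    have hu2 : u2 = x2 * (y1 * x2 + y2)⁻¹ := (eq_mul_inv_iff_mul_eq₀ hv).2 h12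
    have hu1 : u1 = x1 - u2 * (y1 * x1) := eq_sub_of_add_eq h11
    simp only [normMap, hu1, hu2, add_comm y2]
end

section
/- The homogeneous normalization map φ is birational, with explicit inverse ψ given by ψ((u¹,u²),(v¹,v²)) = ((x¹,x²),(y¹,y²)) where x¹ = u¹ + u²v¹, x² = u²v², y¹ = v¹(u¹ + u²v¹)⁻¹, y² = v² − v¹(u¹ + u²v¹)⁻¹u²v². Namely: (i) if y² + y¹x² ≠ 0 and x¹ ≠ 0, then ψ(φ((x¹,x²),(y¹,y²))) = ((x¹,x²),(y¹,y²)); (ii) if v² ≠ 0 and u¹ + u²v¹ ≠ 0, then φ(ψ((u¹,u²),(v¹,v²))) = ((u¹,u²),(v¹,v²)). -/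
variable {D : Type*} [DivisionRing D]

/-- The explicit inverse `ψ` of the homogeneous normalization map. -/
def normMapInv : (D × D) × (D × D) → (D × D) × (D × D) :=
  fun ⟨⟨u1, u2⟩, ⟨v1, v2⟩⟩ =>
    ((u1 + u2 * v1, u2 * v2),
     (v1 * (u1 + u2 * v1)⁻¹, v2 - v1 * (u1 + u2 * v1)⁻¹ * (u2 * v2)))

/-! `φ` is the composite of two triangular changes of variables: first `y` is replaced by
`v = (y¹x¹, y² + y¹x²)` keeping `x`, then `x` is replaced by `u = (x¹ − x²(v²)⁻¹v¹, x²(v²)⁻¹)`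
keeping `v`. The first step is undone by `y¹ = v¹(x¹)⁻¹, y² = v² − y¹x²` wherever `x¹ ≠ 0`, the
second by `x¹ = u¹ + u²v¹, x² = u²v²` wherever `v² ≠ 0`, and `ψ` is the composite of these two
inverses in the opposite order. -/

open Set

def normMapSnd : (D × D) × (D × D) → (D × D) × (D × D) :=
  fun ⟨⟨x1, x2⟩, ⟨y1, y2⟩⟩ => ((x1, x2), (y1 * x1, y2 + y1 * x2))

def normMapSndInv : (D × D) × (D × D) → (D × D) × (D × D) :=
  fun ⟨⟨x1, x2⟩, ⟨v1, v2⟩⟩ => ((x1, x2), (v1 * x1⁻¹, v2 - v1 * x1⁻¹ * x2))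

def normMapFst : (D × D) × (D × D) → (D × D) × (D × D) :=
  fun ⟨⟨x1, x2⟩, ⟨v1, v2⟩⟩ => ((x1 - x2 * v2⁻¹ * v1, x2 * v2⁻¹), (v1, v2))

def normMapFstInv : (D × D) × (D × D) → (D × D) × (D × D) :=
  fun ⟨⟨u1, u2⟩, ⟨v1, v2⟩⟩ => ((u1 + u2 * v1, u2 * v2), (v1, v2))

theorem normMap_eq_comp : normMap = normMapFst ∘ normMapSnd (D := D) :=
  funext fun ⟨⟨_, _⟩, ⟨_, _⟩⟩ => rfl

theorem normMapInv_eq_comp : normMapInv = normMapSndInv ∘ normMapFstInv (D := D) :=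
  funext fun ⟨⟨_, _⟩, ⟨_, _⟩⟩ => rfl

theorem invOn_normMapSnd :
    InvOn normMapSndInv normMapSnd {p : (D × D) × (D × D) | p.1.1 ≠ 0} {p | p.1.1 ≠ 0} := by
  constructor
  · rintro ⟨⟨x1, x2⟩, ⟨y1, y2⟩⟩ (hx : x1 ≠ 0)
    simp [normMapSnd, normMapSndInv, mul_inv_cancel_right₀ hx]
  · rintro ⟨⟨x1, x2⟩, ⟨v1, v2⟩⟩ (hx : x1 ≠ 0)
    simp [normMapSnd, normMapSndInv, inv_mul_cancel_right₀ hx]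

theorem invOn_normMapFst :
    InvOn normMapFstInv normMapFst {p : (D × D) × (D × D) | p.2.2 ≠ 0} {p | p.2.2 ≠ 0} := by
  constructor
  · rintro ⟨⟨x1, x2⟩, ⟨v1, v2⟩⟩ (hv : v2 ≠ 0)
    simp [normMapFst, normMapFstInv, inv_mul_cancel_right₀ hv]
  · rintro ⟨⟨u1, u2⟩, ⟨v1, v2⟩⟩ (hv : v2 ≠ 0)
    simp [normMapFst, normMapFstInv, mul_inv_cancel_right₀ hv]

theorem leftInvOn_normMapInv_normMap :
    LeftInvOn normMapInv normMap
      {p : (D × D) × (D × D) | p.1.1 ≠ 0 ∧ p.2.2 + p.2.1 * p.1.2 ≠ 0} := by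
  rw [normMap_eq_comp, normMapInv_eq_comp]
  refine invOn_normMapSnd.1.mono (fun _ hp ↦ hp.1) |>.comp invOn_normMapFst.1 ?_
  exact fun ⟨⟨_, _⟩, ⟨_, _⟩⟩ hp ↦ hp.2

theorem rightInvOn_normMapInv_normMap :
    RightInvOn normMapInv normMap
      {p : (D × D) × (D × D) | p.2.2 ≠ 0 ∧ p.1.1 + p.1.2 * p.2.1 ≠ 0} := by
  rw [normMap_eq_comp, normMapInv_eq_comp]
  refine invOn_normMapSnd.2.comp (invOn_normMapFst.2.mono fun _ hp ↦ hp.1) ?_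
  exact fun ⟨⟨_, _⟩, ⟨_, _⟩⟩ hp ↦ hp.2

/-- The homogeneous normalization map is birational, with explicit inverse `ψ`. -/
theorem normMap_birational :
    (∀ x1 x2 y1 y2 : D, y2 + y1 * x2 ≠ 0 → x1 ≠ 0 →
      normMapInv (normMap ((x1, x2), (y1, y2))) = ((x1, x2), (y1, y2))) ∧
    (∀ u1 u2 v1 v2 : D, v2 ≠ 0 → u1 + u2 * v1 ≠ 0 →
      normMap (normMapInv ((u1, u2), (v1, v2))) = ((u1, u2), (v1, v2))) :=
  ⟨fun _ _ _ _ hv hx ↦ leftInvOn_normMapInv_normMap ⟨hx, hv⟩,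
   fun _ _ _ _ hv hx ↦ rightInvOn_normMapInv_normMap ⟨hv, hx⟩⟩
end

section
/- The map φ^{1,2} (the N = 3 extension of the homogeneous normalization map) is a constant Pentagon map: for all x = (x¹,x²,x³), y = (y¹,y²,y³), z = (z¹,z²,z³) in D³ such that y² + y¹x² ≠ 0, z² + z¹y² ≠ 0 and z² + z¹(y² + y¹x²) ≠ 0, one has φ^{1,2}₁₂(φ^{1,2}₁₃(φ^{1,2}₂₃(x,y,z))) = φ^{1,2}₂₃(φ^{1,2}₁₂(x,y,z)). -/
variable {D : Type*} [DivisionRing D]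

/-- The map `φ^{1,2}`, the `N = 3` extension of the homogeneous normalization map. -/
def phi12 : (D × D × D) × (D × D × D) → (D × D × D) × (D × D × D) :=
  fun ⟨⟨x1, x2, x3⟩, ⟨y1, y2, y3⟩⟩ =>
    ((x1 - x2 * (y2 + y1 * x2)⁻¹ * (y1 * x1),
      x2 * (y2 + y1 * x2)⁻¹,
      x3 - x2 * (y2 + y1 * x2)⁻¹ * (y3 + y1 * x3)),
     (y1 * x1, y2 + y1 * x2, y3 + y1 * x3))

theorem map12_map13_map23_eq_map23_map12 {X : Type*} {S : X × X → X × X} (mul f : X → X → X)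
    (hS : ∀ p, S p = (f p.1 p.2, mul p.2 p.1)) (x y z : X)
    (h_assoc : mul (mul z y) x = mul z (mul y x))
    (h_mul : mul (f y z) (f x (mul z y)) = f (mul y x) z)
    (h_f : f (f x (mul z y)) (f y z) = f x y) :
    map12 S (map13 S (map23 S (x, y, z))) = map23 S (map12 S (x, y, z)) := by
  simp only [map12, map13, map23, hS, h_assoc, h_mul, h_f]

namespace Phi12

/-- The first row of the product of the matrices whose first rows are `y` and `x` and whose
other rows are those of the identity matrix. -/
def rowMul (y x : D × D × D) : D × D × D :=
  (y.1 * x.1, y.2.1 + y.1 * x.2.1, y.2.2 + y.1 * x.2.2)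

/-- For `w.2.1 ≠ 0` this is `x - (x.2.1 * w.2.1⁻¹) • (w - (0, 1, 0))` (`normalize_eq_sub_smul`);
it is written componentwise so that it is the first component of `phi12` also when `w.2.1 = 0`. -/
def normalize (x w : D × D × D) : D × D × D :=
  (x.1 - x.2.1 * w.2.1⁻¹ * w.1, x.2.1 * w.2.1⁻¹, x.2.2 - x.2.1 * w.2.1⁻¹ * w.2.2)

theorem normalize_eq_sub_smul (x : D × D × D) {w : D × D × D} (hw : w.2.1 ≠ 0) :
    normalize x w = x - (x.2.1 * w.2.1⁻¹) • (w - (0, 1, 0)) := by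
  ext <;> simp [normalize, mul_sub, mul_assoc, inv_mul_cancel₀ hw]

theorem normalize_fst (x w : D × D × D) : (normalize x w).1 = x.1 - x.2.1 * w.2.1⁻¹ * w.1 := rfl

theorem normalize_snd_fst (x w : D × D × D) : (normalize x w).2.1 = x.2.1 * w.2.1⁻¹ := rfl

theorem rowMul_assoc (x y z : D × D × D) : rowMul (rowMul z y) x = rowMul z (rowMul y x) := by
  simp only [rowMul, Prod.mk.injEq]
  refine ⟨?_, ?_, ?_⟩ <;> noncomm_ring

theorem rowMul_eq_add_smul (y x : D × D × D) : rowMul y x = y + y.1 • (x - (1, 0, 0)) := by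
  ext <;> simp [rowMul, mul_sub]

theorem phi12_apply (p : (D × D × D) × (D × D × D)) :
    phi12 p = (normalize p.1 (rowMul p.2 p.1), rowMul p.2 p.1) := by
  obtain ⟨⟨x1, x2, x3⟩, ⟨y1, y2, y3⟩⟩ := p
  simp [phi12, normalize, rowMul, mul_assoc]

theorem normalize_normalize (x : D × D × D) {w W : D × D × D} (hw : w.2.1 ≠ 0)
    (hW : W.2.1 ≠ 0) : normalize (normalize x W) (normalize w W) = normalize x w := by
  have hcoef : x.2.1 * W.2.1⁻¹ * (w.2.1 * W.2.1⁻¹)⁻¹ = x.2.1 * w.2.1⁻¹ := by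
    rw [mul_inv_rev, inv_inv, mul_assoc, inv_mul_cancel_left₀ hW]
  have hs : x.2.1 * w.2.1⁻¹ * (w.2.1 * W.2.1⁻¹) = x.2.1 * W.2.1⁻¹ := by
    rw [mul_assoc, inv_mul_cancel_left₀ hw]
  have hr : (normalize w W).2.1 ≠ 0 := mul_ne_zero hw (inv_ne_zero hW)
  rw [normalize_eq_sub_smul _ hr, normalize_snd_fst, normalize_snd_fst, hcoef,
    normalize_eq_sub_smul _ hW, normalize_eq_sub_smul _ hW, normalize_eq_sub_smul _ hw,
    ← hs, mul_smul]
  simp only [smul_sub]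
  abel

theorem rowMul_normalize (x y V : D × D × D) (hV : V.2.1 ≠ 0) (hW : (rowMul V x).2.1 ≠ 0) :
    rowMul (normalize y V) (normalize x (rowMul V x)) = normalize (rowMul y x) (rowMul V x) := by
  have hcoef : (rowMul y x).2.1 * (rowMul V x).2.1⁻¹ = y.2.1 * V.2.1⁻¹ +
      (y.1 - y.2.1 * V.2.1⁻¹ * V.1) * (x.2.1 * (rowMul V x).2.1⁻¹) := by
    apply mul_right_cancel₀ hW
    simp only [add_mul, mul_assoc, inv_mul_cancel₀ hW, mul_one]
    simp only [rowMul, mul_add, ← mul_assoc, inv_mul_cancel_right₀ hV]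
    noncomm_ring
  have hW_sub : rowMul V x - (0, 1, 0) = V - (0, 1, 0) + V.1 • (x - (1, 0, 0)) := by
    rw [rowMul_eq_add_smul]
    abel
  rw [rowMul_eq_add_smul, normalize_fst, normalize_eq_sub_smul _ hV, normalize_eq_sub_smul _ hW,
    normalize_eq_sub_smul _ hW, hcoef, hW_sub, rowMul_eq_add_smul y x]
  simp only [smul_sub, sub_smul, add_smul, smul_add, mul_smul]
  abel

end Phi12

/-- The map `φ^{1,2}` is a constant Pentagon map. -/
theorem phi12_pentagon (x1 x2 x3 y1 y2 y3 z1 z2 z3 : D)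
    (h1 : y2 + y1 * x2 ≠ 0) (h2 : z2 + z1 * y2 ≠ 0)
    (h3 : z2 + z1 * (y2 + y1 * x2) ≠ 0) :
    map12 phi12 (map13 phi12 (map23 phi12 ((x1, x2, x3), (y1, y2, y3), (z1, z2, z3)))) =
      map23 phi12 (map12 phi12 ((x1, x2, x3), (y1, y2, y3), (z1, z2, z3))) := by
  open Phi12 in
  set x : D × D × D := (x1, x2, x3)
  set y : D × D × D := (y1, y2, y3)
  set z : D × D × D := (z1, z2, z3)
  have hyx : (rowMul y x).2.1 ≠ 0 := h1
  have hzy : (rowMul z y).2.1 ≠ 0 := h2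
  have hzyx : (rowMul (rowMul z y) x).2.1 ≠ 0 := by rwa [rowMul_assoc]
  have h_mul := rowMul_normalize x y _ hzy hzyx
  refine map12_map13_map23_eq_map23_map12 rowMul (fun a b => normalize a (rowMul b a))
    phi12_apply x y z (rowMul_assoc x y z) ?_ ?_
  · rwa [← rowMul_assoc]
  · simp only [h_mul, normalize_normalize x hyx hzyx]
end

section
/- For all x, y, z in D³ with x² ≠ 0, y² + y¹x² ≠ 0, z² + z¹y² ≠ 0 and γ := z² + z¹(y² + y¹x²) ≠ 0, both φ^{1,2}₁₂ ∘ φ^{1,2}₁₃ ∘ φ^{1,2}₂₃ and φ^{1,2}₂₃ ∘ φ^{1,2}₁₂ send (x,y,z) to the explicit triple (x̂,ŷ,ẑ) given by: x̂¹ = x²(y²+y¹x²)⁻¹y²(x²)⁻¹x¹, x̂² = x²(y²+y¹x²)⁻¹, x̂³ = x²(y²+y¹x²)⁻¹(y²(x²)⁻¹x³ − y³); ŷ¹ = y¹x¹ − (y²+y¹x²)γ⁻¹z¹y¹x¹, ŷ² = (y²+y¹x²)γ⁻¹, ŷ³ = y³ + y¹x³ − (y²+y¹x²)γ⁻¹δ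 with δ := z³ + z¹(y³ + y¹x³); ẑ¹ = z¹y¹x¹, ẑ² = z² + z¹(y²+y¹x²), ẑ³ = z³ + z¹(y³+y¹x³). -/
variable {D : Type*} [DivisionRing D]

/-- The first row of `M y * M x`, where `M x = !![x.1, x.2.1, x.2.2; 0, 1, 0; 0, 0, 1]`. -/
def rowMul {R : Type*} [Add R] [Mul R] (y x : R × R × R) : R × R × R :=
  (y.1 * x.1, y.2.1 + y.1 * x.2.1, y.2.2 + y.1 * x.2.2)

theorem rowMul_assoc {R : Type*} [NonUnitalSemiring R] (z y x : R × R × R) :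
    rowMul (rowMul z y) x = rowMul z (rowMul y x) := by
  simp only [rowMul, mul_add, mul_assoc, add_assoc]

/-- `x ⊙ v⁻¹` for the product `x ⊙ a = (x.1 + x.2.1 * a.1, x.2.1 * a.2.1, x.2.2 + x.2.1 * a.2.2)`,
in which `v` has inverse `(-v.2.1⁻¹ * v.1, v.2.1⁻¹, -v.2.1⁻¹ * v.2.2)` when `v.2.1 ≠ 0`. -/
def rowDiv (x v : D × D × D) : D × D × D :=
  (x.1 - x.2.1 * v.2.1⁻¹ * v.1, x.2.1 * v.2.1⁻¹, x.2.2 - x.2.1 * v.2.1⁻¹ * v.2.2)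

theorem phi12_apply (x y : D × D × D) : phi12 (x, y) = (rowDiv x (rowMul y x), rowMul y x) := rfl

theorem rowDiv_rowDiv (x v w : D × D × D) (hv : v.2.1 ≠ 0) (hw : w.2.1 ≠ 0) :
    rowDiv (rowDiv x w) (rowDiv v w) = rowDiv x v := by
  obtain ⟨x1, x2, x3⟩ := x
  obtain ⟨v1, v2, v3⟩ := v
  obtain ⟨w1, w2, w3⟩ := w
  have hcoef : x2 * w2⁻¹ * (v2 * w2⁻¹)⁻¹ = x2 * v2⁻¹ := by
    rw [mul_inv_rev, inv_inv, mul_assoc, inv_mul_cancel_left₀ hw]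
  have hcancel : x2 * v2⁻¹ * v2 = x2 := inv_mul_cancel_right₀ hv x2
  simp only [rowDiv, hcoef, Prod.mk.injEq, mul_sub, ← mul_assoc, hcancel]
  refine ⟨?_, trivial, ?_⟩ <;> abel

theorem rowMul_rowDiv (y x s : D × D × D) (hs : s.2.1 ≠ 0) (hsx : (rowMul s x).2.1 ≠ 0) :
    rowMul (rowDiv y s) (rowDiv x (rowMul s x)) = rowDiv (rowMul y x) (rowMul s x) := by
  obtain ⟨y1, y2, y3⟩ := y
  obtain ⟨x1, x2, x3⟩ := x
  obtain ⟨s1, s2, s3⟩ := s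
  simp only [rowMul, rowDiv] at hsx ⊢
  set t := s2 + s1 * x2 with ht
  -- `s₁x₂ = t - s₂`
  have key : s2⁻¹ * (s1 * x2) * t⁻¹ - (s2⁻¹ - t⁻¹) = 0 := by
    rw [sub_eq_zero, show s1 * x2 = t - s2 by rw [ht]; abel, mul_sub, sub_mul,
      mul_inv_cancel_right₀ hsx, inv_mul_cancel₀ hs, one_mul]
  refine Prod.ext ?_ (Prod.ext ?_ ?_) <;> rw [← sub_eq_zero]
  · calc _ = y2 * (s2⁻¹ * (s1 * x2) * t⁻¹ - (s2⁻¹ - t⁻¹)) * (s1 * x1) := by noncomm_ring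
      _ = 0 := by rw [key, mul_zero, zero_mul]
  · calc _ = -(y2 * (s2⁻¹ * (s1 * x2) * t⁻¹ - (s2⁻¹ - t⁻¹))) := by noncomm_ring
      _ = 0 := by rw [key, mul_zero, neg_zero]
  · calc _ = y2 * (s2⁻¹ * (s1 * x2) * t⁻¹ - (s2⁻¹ - t⁻¹)) * (s3 + s1 * x3) := by noncomm_ring
      _ = 0 := by rw [key, mul_zero, zero_mul]

theorem phi12_pentagon_s11 (x y z : D × D × D) (hyx : (rowMul y x).2.1 ≠ 0)
    (hzy : (rowMul z y).2.1 ≠ 0) (hzyx : (rowMul z (rowMul y x)).2.1 ≠ 0) :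
    map12 phi12 (map13 phi12 (map23 phi12 (x, y, z))) = map23 phi12 (map12 phi12 (x, y, z)) := by
  have hzy_x : (rowMul (rowMul z y) x).2.1 ≠ 0 := by rwa [rowMul_assoc]
  simp only [map12, map13, map23, phi12_apply]
  rw [rowMul_rowDiv y x (rowMul z y) hzy hzy_x, rowDiv_rowDiv _ _ _ hyx hzy_x, rowMul_assoc]

theorem mul_inv_mul_mul_inv_eq_one_sub (a b c : D) (ha : a ≠ 0) (hs : b + c * a ≠ 0) :
    a * (b + c * a)⁻¹ * b * a⁻¹ = 1 - a * (b + c * a)⁻¹ * c := by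
  refine eq_sub_of_add_eq ?_
  calc a * (b + c * a)⁻¹ * b * a⁻¹ + a * (b + c * a)⁻¹ * c
      = a * (b + c * a)⁻¹ * (b + c * a) * a⁻¹ := by
        rw [mul_assoc _ (b + c * a), add_mul, mul_assoc c, mul_inv_cancel₀ ha, mul_one]
        noncomm_ring
    _ = 1 := by rw [inv_mul_cancel_right₀ hs, mul_inv_cancel₀ ha]

theorem rowDiv_rowMul_self (x y : D × D × D) (hx : x.2.1 ≠ 0) (hyx : (rowMul y x).2.1 ≠ 0) :
    rowDiv x (rowMul y x) =
      (x.2.1 * (y.2.1 + y.1 * x.2.1)⁻¹ * y.2.1 * x.2.1⁻¹ * x.1,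
        x.2.1 * (y.2.1 + y.1 * x.2.1)⁻¹,
        x.2.1 * (y.2.1 + y.1 * x.2.1)⁻¹ * (y.2.1 * x.2.1⁻¹ * x.2.2 - y.2.2)) := by
  obtain ⟨x1, x2, x3⟩ := x
  obtain ⟨y1, y2, y3⟩ := y
  have key := mul_inv_mul_mul_inv_eq_one_sub x2 y2 y1 hx hyx
  simp only [rowDiv, rowMul, Prod.mk.injEq, mul_sub, ← mul_assoc, key]
  refine ⟨?_, trivial, ?_⟩ <;> noncomm_ring

/-- Both sides of the Pentagon relation for `φ^{1,2}` send `(x, y, z)` to the same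
explicit triple `(x̂, ŷ, ẑ)`. -/
theorem phi12_pentagon_explicit (x1 x2 x3 y1 y2 y3 z1 z2 z3 : D)
    (hx : x2 ≠ 0)
    (h1 : y2 + y1 * x2 ≠ 0) (h2 : z2 + z1 * y2 ≠ 0)
    (h3 : z2 + z1 * (y2 + y1 * x2) ≠ 0) :
    map12 phi12 (map13 phi12 (map23 phi12 ((x1, x2, x3), (y1, y2, y3), (z1, z2, z3)))) =
      ((x2 * (y2 + y1 * x2)⁻¹ * y2 * x2⁻¹ * x1,
        x2 * (y2 + y1 * x2)⁻¹,
        x2 * (y2 + y1 * x2)⁻¹ * (y2 * x2⁻¹ * x3 - y3)),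
       (y1 * x1 - (y2 + y1 * x2) * (z2 + z1 * (y2 + y1 * x2))⁻¹ * (z1 * (y1 * x1)),
        (y2 + y1 * x2) * (z2 + z1 * (y2 + y1 * x2))⁻¹,
        y3 + y1 * x3 - (y2 + y1 * x2) * (z2 + z1 * (y2 + y1 * x2))⁻¹ *
          (z3 + z1 * (y3 + y1 * x3))),
       (z1 * (y1 * x1),
        z2 + z1 * (y2 + y1 * x2),
        z3 + z1 * (y3 + y1 * x3))) ∧
    map23 phi12 (map12 phi12 ((x1, x2, x3), (y1, y2, y3), (z1, z2, z3))) =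
      ((x2 * (y2 + y1 * x2)⁻¹ * y2 * x2⁻¹ * x1,
        x2 * (y2 + y1 * x2)⁻¹,
        x2 * (y2 + y1 * x2)⁻¹ * (y2 * x2⁻¹ * x3 - y3)),
       (y1 * x1 - (y2 + y1 * x2) * (z2 + z1 * (y2 + y1 * x2))⁻¹ * (z1 * (y1 * x1)),
        (y2 + y1 * x2) * (z2 + z1 * (y2 + y1 * x2))⁻¹,
        y3 + y1 * x3 - (y2 + y1 * x2) * (z2 + z1 * (y2 + y1 * x2))⁻¹ *
          (z3 + z1 * (y3 + y1 * x3))),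
       (z1 * (y1 * x1),
        z2 + z1 * (y2 + y1 * x2),
        z3 + z1 * (y3 + y1 * x3))) := by
  rw [phi12_pentagon_s11 (x1, x2, x3) (y1, y2, y3) (z1, z2, z3) h1 h2 h3, and_self]
  simp only [map12, map23, phi12_apply, rowDiv_rowMul_self (x1, x2, x3) (y1, y2, y3) hx h1]
  rfl
end

section
/- The maps φ^{1,2}, φ^{1,3} := (σ₂₃ × σ₂₃) ∘ φ^{1,2} ∘ (σ₂₃ × σ₂₃) and φ^{2,3} := (σ₁₂ × σ₁₂) ∘ φ^{1,3} ∘ (σ₁₂ × σ₁₂) satisfy the entwining (non-constant) Yang-Baxter relation: for all x, y, z in D³ such that every element whose inverse is taken in the evaluation of either side at (x,y,z) is nonzero, φ^{1,2}₁₂ ∘ φ^{1,3}₁₃ ∘ φ^{2,3}₂₃ (x,y,z) = φ^{2,3}₂₃ ∘ φ^{1,3}₁₃ ∘ φ^{1,2}₁₂ (x,y,z). -/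
variable {D : Type*} [DivisionRing D]

/-- The involution `σ₂₃` interchanging the second and third components. -/
def sigma23 : D × D × D → D × D × D := fun ⟨x1, x2, x3⟩ => (x1, x3, x2)

/-- The involution `σ₁₂` interchanging the first and second components. -/
def sigma12 : D × D × D → D × D × D := fun ⟨x1, x2, x3⟩ => (x2, x1, x3)

/-- The conjugate map `φ^{1,3} = (σ₂₃ × σ₂₃) ∘ φ^{1,2} ∘ (σ₂₃ × σ₂₃)`. -/
def phi13 : (D × D × D) × (D × D × D) → (D × D × D) × (D × D × D) :=
  Prod.map sigma23 sigma23 ∘ phi12 ∘ Prod.map sigma23 sigma23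

/-- The conjugate map `φ^{2,3} = (σ₁₂ × σ₁₂) ∘ φ^{1,3} ∘ (σ₁₂ × σ₁₂)`. -/
def phi23 : (D × D × D) × (D × D × D) → (D × D × D) × (D × D × D) :=
  Prod.map sigma12 sigma12 ∘ phi13 ∘ Prod.map sigma12 sigma12

/-- The element inverted when evaluating `φ^{1,2}` at `(a, b)`. -/
def invArg12 (a b : D × D × D) : D := b.2.1 + b.1 * a.2.1

/-- The element inverted when evaluating `φ^{1,3}` at `(a, b)`. -/
def invArg13 (a b : D × D × D) : D := invArg12 (sigma23 a) (sigma23 b)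

/-- The element inverted when evaluating `φ^{2,3}` at `(a, b)`. -/
def invArg23 (a b : D × D × D) : D := invArg13 (sigma12 a) (sigma12 b)

namespace Matrix

variable {n R : Type*} [Fintype n] [DecidableEq n]

theorem one_updateRow_mul [NonAssocSemiring R] (i : n) (v : n → R) (M : Matrix n n R) :
    (1 : Matrix n n R).updateRow i v * M = M.updateRow i (v ᵥ* M) := by
  rw [updateRow_mul, Matrix.one_mul]

theorem one_updateRow_mul_one_updateRow_inv [DivisionRing R] {i : n} {v : n → R} (hv : v i ≠ 0) :
    (1 : Matrix n n R).updateRow i v *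
      (1 : Matrix n n R).updateRow i (Function.update (-((v i)⁻¹ • v)) i (v i)⁻¹) = 1 := by
  rw [one_updateRow_mul, updateRow_idem]
  convert updateRow_eq_self (1 : Matrix n n R) i
  ext j
  rw [vecMul, dotProduct, Fintype.sum_eq_add_sum_compl i]
  rcases eq_or_ne j i with rfl | hj
  · simp [updateRow_apply, one_apply, hv, Finset.sum_ite, Finset.filter_eq', Finset.filter_ne']
  · simp [updateRow_apply, one_apply, hj, hj.symm, hv, Finset.sum_ite, Finset.filter_eq',
      Finset.filter_ne']

theorem isRightRegular_one_updateRow [DivisionRing R] {i : n} {v : n → R} (hv : v i ≠ 0) :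
    IsRightRegular ((1 : Matrix n n R).updateRow i v) :=
  isRightRegular_of_mul_eq_one (one_updateRow_mul_one_updateRow_inv hv)

end Matrix

def IsRefactorizationAt {X M : Type*} [Mul M] (L L' : X → M) (S : X × X → X × X) (a b : X) : Prop :=
  L (S (a, b)).1 * L' (S (a, b)).2 = L' b * L a

section YangBaxter

variable {X M : Type*} [Semigroup M] (L₁ L₂ L₃ : X → M) {S₁₂ S₁₃ S₂₃ : X × X → X × X}
  {x y z : X}

theorem mul_mul_map12_map13_map23 (h₂₃ : IsRefactorizationAt L₂ L₃ S₂₃ y z)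
    (h₁₃ : IsRefactorizationAt L₁ L₃ S₁₃ x (S₂₃ (y, z)).2)
    (h₁₂ : IsRefactorizationAt L₁ L₂ S₁₂ (S₁₃ (x, (S₂₃ (y, z)).2)).1 (S₂₃ (y, z)).1) :
    L₁ (map12 S₁₂ (map13 S₁₃ (map23 S₂₃ (x, y, z)))).1 *
        L₂ (map12 S₁₂ (map13 S₁₃ (map23 S₂₃ (x, y, z)))).2.1 *
        L₃ (map12 S₁₂ (map13 S₁₃ (map23 S₂₃ (x, y, z)))).2.2 =
      L₃ z * L₂ y * L₁ x := by
  dsimp only [map12, map13, map23]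
  rw [h₁₂, mul_assoc, h₁₃, ← mul_assoc, h₂₃]

theorem mul_mul_map23_map13_map12 (h₁₂ : IsRefactorizationAt L₁ L₂ S₁₂ x y)
    (h₁₃ : IsRefactorizationAt L₁ L₃ S₁₃ (S₁₂ (x, y)).1 z)
    (h₂₃ : IsRefactorizationAt L₂ L₃ S₂₃ (S₁₂ (x, y)).2 (S₁₃ ((S₁₂ (x, y)).1, z)).2) :
    L₁ (map23 S₂₃ (map13 S₁₃ (map12 S₁₂ (x, y, z)))).1 *
        L₂ (map23 S₂₃ (map13 S₁₃ (map12 S₁₂ (x, y, z)))).2.1 *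
        L₃ (map23 S₂₃ (map13 S₁₃ (map12 S₁₂ (x, y, z)))).2.2 =
      L₃ z * L₂ y * L₁ x := by
  dsimp only [map12, map13, map23]
  rw [mul_assoc, h₂₃, ← mul_assoc, h₁₃, mul_assoc, h₁₂, mul_assoc]

end YangBaxter

def laxMatrix (i : Fin 3) (a : D × D × D) : Matrix (Fin 3) (Fin 3) D :=
  (1 : Matrix (Fin 3) (Fin 3) D).updateRow i ![a.1, a.2.1, a.2.2]

theorem isRefactorizationAt_phi12 {a b : D × D × D} (h : invArg12 a b ≠ 0) :
    IsRefactorizationAt (laxMatrix 0) (laxMatrix 1) phi12 a b := by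
  obtain ⟨a1, a2, a3⟩ := a
  obtain ⟨b1, b2, b3⟩ := b
  dsimp only [invArg12] at h
  unfold IsRefactorizationAt
  ext i j
  fin_cases i <;> fin_cases j <;>
    simp [laxMatrix, phi12, Matrix.mul_apply, Fin.sum_univ_three, Matrix.updateRow_apply,
      Matrix.one_apply, inv_mul_cancel_right₀ h, add_comm]

theorem isRefactorizationAt_phi13 {a b : D × D × D} (h : invArg13 a b ≠ 0) :
    IsRefactorizationAt (laxMatrix 0) (laxMatrix 2) phi13 a b := by
  obtain ⟨a1, a2, a3⟩ := a
  obtain ⟨b1, b2, b3⟩ := b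
  dsimp only [invArg13, invArg12, sigma23] at h
  unfold IsRefactorizationAt
  ext i j
  fin_cases i <;> fin_cases j <;>
    simp [laxMatrix, phi13, phi12, sigma23, Matrix.mul_apply, Fin.sum_univ_three,
      Matrix.updateRow_apply, Matrix.one_apply, inv_mul_cancel_right₀ h, add_comm]

theorem isRefactorizationAt_phi23 {a b : D × D × D} (h : invArg23 a b ≠ 0) :
    IsRefactorizationAt (laxMatrix 1) (laxMatrix 2) phi23 a b := by
  obtain ⟨a1, a2, a3⟩ := a
  obtain ⟨b1, b2, b3⟩ := b
  dsimp only [invArg23, invArg13, invArg12, sigma12, sigma23] at h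
  unfold IsRefactorizationAt
  ext i j
  fin_cases i <;> fin_cases j <;>
    simp [laxMatrix, phi23, phi13, phi12, sigma12, sigma23, Matrix.mul_apply,
      Fin.sum_univ_three, Matrix.updateRow_apply, Matrix.one_apply, inv_mul_cancel_right₀ h,
      add_comm]

theorem laxMatrix_mul_apply_of_ne {i j : Fin 3} (h : j ≠ i) (a : D × D × D)
    (M : Matrix (Fin 3) (Fin 3) D) : (laxMatrix i a * M) j = M j := by
  rw [laxMatrix, Matrix.one_updateRow_mul, Matrix.updateRow_ne h]

theorem laxMatrix_apply_self_injective (i : Fin 3) :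
    Function.Injective fun a : D × D × D => laxMatrix i a i := fun a b h => by
  simp only [laxMatrix, Matrix.updateRow_self] at h
  exact Prod.ext (congrFun h 0) (Prod.ext (congrFun h 1) (congrFun h 2))

theorem eq_of_laxMatrix_mul_mul_eq {s t : (D × D × D) × (D × D × D) × (D × D × D)}
    (hb : s.2.1.2.1 ≠ 0) (hc : s.2.2.2.2 ≠ 0)
    (h : laxMatrix 0 s.1 * laxMatrix 1 s.2.1 * laxMatrix 2 s.2.2 =
      laxMatrix 0 t.1 * laxMatrix 1 t.2.1 * laxMatrix 2 t.2.2) : s = t := by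
  obtain ⟨a, b, c⟩ := s
  obtain ⟨a', b', c'⟩ := t
  obtain rfl : c = c' := laxMatrix_apply_self_injective 2 <| by
    simpa only [mul_assoc, laxMatrix_mul_apply_of_ne (by decide : (2 : Fin 3) ≠ 0),
      laxMatrix_mul_apply_of_ne (by decide : (2 : Fin 3) ≠ 1)] using congrFun h 2
  have hab : laxMatrix 0 a * laxMatrix 1 b = laxMatrix 0 a' * laxMatrix 1 b' :=
    Matrix.isRightRegular_one_updateRow (i := 2) hc h
  obtain rfl : b = b' := laxMatrix_apply_self_injective 1 <| by
    simpa only [laxMatrix_mul_apply_of_ne (by decide : (1 : Fin 3) ≠ 0)] using congrFun hab 1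
  obtain rfl : a = a' := laxMatrix_apply_self_injective 0 <|
    congrFun (Matrix.isRightRegular_one_updateRow (i := 1) hb hab) 0
  rfl

/-- The maps `φ^{1,2}`, `φ^{1,3}`, `φ^{2,3}` satisfy the entwining (non-constant)
Yang-Baxter relation, wherever all the inverses taken on either side are inverses of
nonzero elements. -/
theorem entwining_yang_baxter_phi (x y z : D × D × D)
    (hL1 : invArg23 y z ≠ 0)
    (hL2 : invArg13 (map23 phi23 (x, y, z)).1 (map23 phi23 (x, y, z)).2.2 ≠ 0)
    (hL3 : invArg12 (map13 phi13 (map23 phi23 (x, y, z))).1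
             (map13 phi13 (map23 phi23 (x, y, z))).2.1 ≠ 0)
    (hR1 : invArg12 x y ≠ 0)
    (hR2 : invArg13 (map12 phi12 (x, y, z)).1 (map12 phi12 (x, y, z)).2.2 ≠ 0)
    (hR3 : invArg23 (map13 phi13 (map12 phi12 (x, y, z))).2.1
             (map13 phi13 (map12 phi12 (x, y, z))).2.2 ≠ 0) :
    map12 phi12 (map13 phi13 (map23 phi23 (x, y, z))) =
      map23 phi23 (map13 phi13 (map12 phi12 (x, y, z))) := by
  refine eq_of_laxMatrix_mul_mul_eq hL3 hL2 ?_
  rw [mul_mul_map12_map13_map23 _ _ _ (x := x) (isRefactorizationAt_phi23 hL1)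
      (isRefactorizationAt_phi13 hL2) (isRefactorizationAt_phi12 hL3),
    mul_mul_map23_map13_map12 _ _ _ (z := z) (isRefactorizationAt_phi12 hR1)
      (isRefactorizationAt_phi13 hR2) (isRefactorizationAt_phi23 hR3)]
end

section
/- The maps φ^{1,{2,3}}, φ^{1,2} and φ^{{1,3},2} satisfy the entwining (non-constant) Pentagon relation: for all x, y, z in D⁶ such that every element whose inverse is taken in the evaluation of either side at (x,y,z) is nonzero, φ^{1,{2,3}}₁₂ ∘ φ^{1,2}₁₃ ∘ φ^{{1,3},2}₂₃ (x,y,z) = φ^{{1,3},2}₂₃ ∘ φ^{1,{2,3}}₁₂ (x,y,z). -/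
variable {D : Type*} [DivisionRing D]

/-- The map `φ^{1,{2,3}}` on `D⁶ × D⁶`. -/
def phiI : (D × D × D × D × D × D) × (D × D × D × D × D × D) →
    (D × D × D × D × D × D) × (D × D × D × D × D × D) :=
  fun ⟨⟨a1, a2, a3, a4, a5, a6⟩, ⟨b1, b2, b3, b4, b5, b6⟩⟩ =>
    let v1 := b1 * a1; let v2 := b2 + b1 * a2; let v3 := b3 + b1 * a3
    let v4 := b4 * a1; let v5 := b5 + b4 * a2; let v6 := b6 + b4 * a3
    let u2 := (a3 * v6⁻¹ - a2 * v5⁻¹) * (v3 * v6⁻¹ - v2 * v5⁻¹)⁻¹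
    let u3 := (a2 * v2⁻¹ - a3 * v3⁻¹) * (v5 * v2⁻¹ - v6 * v3⁻¹)⁻¹
    ((a1 - u2 * v1 - u3 * v4, u2, u3, a4, a5, a6), (v1, v2, v3, v4, v5, v6))

/-- The map `φ^{1,2}` on `D⁶ × D⁶`. -/
def phiII : (D × D × D × D × D × D) × (D × D × D × D × D × D) →
    (D × D × D × D × D × D) × (D × D × D × D × D × D) :=
  fun ⟨⟨a1, a2, a3, a4, a5, a6⟩, ⟨b1, b2, b3, b4, b5, b6⟩⟩ =>
    let v1 := b1 * a1; let v2 := b2 + b1 * a2; let v3 := b3 + b1 * a3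
    ((a1 - a2 * v2⁻¹ * v1, a2 * v2⁻¹, a3 - a2 * v2⁻¹ * v3, a4, a5, a6),
     (v1, v2, v3, b4, b5, b6))

/-- The map `φ^{{1,3},2}` on `D⁶ × D⁶`. -/
def phiIII : (D × D × D × D × D × D) × (D × D × D × D × D × D) →
    (D × D × D × D × D × D) × (D × D × D × D × D × D) :=
  fun ⟨⟨a1, a2, a3, a4, a5, a6⟩, ⟨b1, b2, b3, b4, b5, b6⟩⟩ =>
    let v1 := b1 * a1 + b3 * a4; let v2 := b2 + b1 * a2 + b3 * a5
    let v3 := b1 * a3 + b3 * a6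
    ((a1 - a2 * v2⁻¹ * v1, a2 * v2⁻¹, a3 - a2 * v2⁻¹ * v3,
      a4 - a5 * v2⁻¹ * v1, a5 * v2⁻¹, a6 - a5 * v2⁻¹ * v3),
     (v1, v2, v3, b4, b5, b6))

/-- All elements inverted when evaluating `φ^{1,{2,3}}` at `(a, b)` are nonzero. -/
def regI (a b : D × D × D × D × D × D) : Prop :=
  match a, b with
  | (_, a2, a3, _, _, _), (b1, b2, b3, b4, b5, b6) =>
    let v2 := b2 + b1 * a2; let v3 := b3 + b1 * a3
    let v5 := b5 + b4 * a2; let v6 := b6 + b4 * a3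
    v2 ≠ 0 ∧ v3 ≠ 0 ∧ v5 ≠ 0 ∧ v6 ≠ 0 ∧
      v3 * v6⁻¹ - v2 * v5⁻¹ ≠ 0 ∧ v5 * v2⁻¹ - v6 * v3⁻¹ ≠ 0

/-- All elements inverted when evaluating `φ^{1,2}` at `(a, b)` are nonzero. -/
def regII (a b : D × D × D × D × D × D) : Prop :=
  b.2.1 + b.1 * a.2.1 ≠ 0

/-- All elements inverted when evaluating `φ^{{1,3},2}` at `(a, b)` are nonzero. -/
def regIII (a b : D × D × D × D × D × D) : Prop :=
  b.2.1 + b.1 * a.2.1 + b.2.2.1 * a.2.2.2.2.1 ≠ 0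

/-!
Read an element of `D⁶` as a `2 × 3` matrix with rows `(a⁽¹⁾, a⁽²⁾, a⁽³⁾)` and
`(a⁽⁴⁾, a⁽⁵⁾, a⁽⁶⁾)`. All three maps then act on rows by right multiplication with elementary
`3 × 3` matrices: `E₁(x)`, `E₂(q)` and `E₁₃(a, c)` denote the identity matrix with its first row,
its second row, respectively its first and third rows replaced by the given rows. On the second and
third factors the pentagon relation reduces to associativity and to the identity
`E₂(s)⁻¹ E₁(x E₂(t)⁻¹) = E₁(x) E₂(t)⁻¹` for `t = s E₁(x)`, i.e.
`E₁(x E₂(t)⁻¹) E₂(t) = E₂(s) E₁(x)`: both are the matrix with rows `x, t, e₃`. On the first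
factor, `φ^{1,{2,3}}` replaces the row `a` by the unique `(w, c, d)` with
`a - c p - d q = (w, 0, 0)`, where `p, q` are the rows of its second output; this characterisation
survives right multiplication of `a, p, q` by `E₂(t)⁻¹`, which fixes `(w, 0, 0)`.
-/

def ofRows {α : Type*} (p q : α × α × α) : α × α × α × α × α × α :=
  (p.1, p.2.1, p.2.2, q.1, q.2.1, q.2.2)

theorem exists_ofRows_eq {α : Type*} (x : α × α × α × α × α × α) :
    ∃ p q : α × α × α, ofRows p q = x :=
  ⟨(x.1, x.2.1, x.2.2.1), (x.2.2.2.1, x.2.2.2.2.1, x.2.2.2.2.2), rfl⟩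

/-- `p E₁(x)`. -/
def mulRow1 (p x : D × D × D) : D × D × D :=
  (p.1 * x.1, p.2.1 + p.1 * x.2.1, p.2.2 + p.1 * x.2.2)

/-- `p E₁₃(a, c)`. -/
def mulRows13 (p a c : D × D × D) : D × D × D :=
  (p.1 * a.1 + p.2.2 * c.1, p.2.1 + p.1 * a.2.1 + p.2.2 * c.2.1, p.1 * a.2.2 + p.2.2 * c.2.2)

/-- `p E₂(q)⁻¹`, provided `q.2.1 ≠ 0`. -/
def divRow2 (p q : D × D × D) : D × D × D :=
  (p.1 - p.2.1 * q.2.1⁻¹ * q.1, p.2.1 * q.2.1⁻¹, p.2.2 - p.2.1 * q.2.1⁻¹ * q.2.2)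

def phiIRow (a p q : D × D × D) : D × D × D :=
  let c := (a.2.2 * q.2.2⁻¹ - a.2.1 * q.2.1⁻¹) * (p.2.2 * q.2.2⁻¹ - p.2.1 * q.2.1⁻¹)⁻¹
  let d := (a.2.1 * p.2.1⁻¹ - a.2.2 * p.2.2⁻¹) * (q.2.1 * p.2.1⁻¹ - q.2.2 * p.2.2⁻¹)⁻¹
  (a.1 - c * p.1 - d * q.1, c, d)

def RegularRows (p q : D × D × D) : Prop :=
  p.2.1 ≠ 0 ∧ p.2.2 ≠ 0 ∧ q.2.1 ≠ 0 ∧ q.2.2 ≠ 0 ∧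
    p.2.2 * q.2.2⁻¹ - p.2.1 * q.2.1⁻¹ ≠ 0 ∧ q.2.1 * p.2.1⁻¹ - q.2.2 * p.2.2⁻¹ ≠ 0

section ofRows

variable (a a' b b' : D × D × D)

theorem phiI_ofRows :
    phiI (ofRows a a', ofRows b b') =
      (ofRows (phiIRow a (mulRow1 b a) (mulRow1 b' a)) a',
        ofRows (mulRow1 b a) (mulRow1 b' a)) := rfl

theorem phiII_ofRows :
    phiII (ofRows a a', ofRows b b') =
      (ofRows (divRow2 a (mulRow1 b a)) a', ofRows (mulRow1 b a) b') := rfl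

theorem phiIII_ofRows :
    phiIII (ofRows a a', ofRows b b') =
      (ofRows (divRow2 a (mulRows13 b a a')) (divRow2 a' (mulRows13 b a a')),
        ofRows (mulRows13 b a a') b') := rfl

theorem regI_ofRows :
    regI (ofRows a a') (ofRows b b') ↔ RegularRows (mulRow1 b a) (mulRow1 b' a) := Iff.rfl

theorem regII_ofRows : regII (ofRows a a') (ofRows b b') ↔ (mulRow1 b a).2.1 ≠ 0 := Iff.rfl

theorem regIII_ofRows :
    regIII (ofRows a a') (ofRows b b') ↔ (mulRows13 b a a').2.1 ≠ 0 := Iff.rfl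

end ofRows

theorem mulRows13_mulRow1 (p a c x : D × D × D) :
    mulRows13 p (mulRow1 a x) (mulRow1 c x) = mulRow1 (mulRows13 p a c) x := by
  simp only [mulRows13, mulRow1, Prod.mk.injEq]
  refine ⟨?_, ?_, ?_⟩ <;> noncomm_ring

theorem mulRow1_divRow2 {s x : D × D × D} (hs : s.2.1 ≠ 0) (ht : (mulRow1 s x).2.1 ≠ 0)
    (y : D × D × D) :
    mulRow1 (divRow2 y s) (divRow2 x (mulRow1 s x)) = divRow2 (mulRow1 y x) (mulRow1 s x) := by
  obtain ⟨s₁, s₂, s₃⟩ := s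
  obtain ⟨x₁, x₂, x₃⟩ := x
  obtain ⟨y₁, y₂, y₃⟩ := y
  simp only [mulRow1, divRow2, Prod.mk.injEq] at hs ht ⊢
  set t₂ := s₂ + s₁ * x₂
  have key : s₂⁻¹ - t₂⁻¹ = s₂⁻¹ * s₁ * x₂ * t₂⁻¹ := by
    rw [inv_sub_inv' hs ht, add_sub_cancel_left]
    simp only [mul_assoc]
  refine ⟨?_, ?_, ?_⟩ <;> rw [← sub_eq_zero]
  · calc _ = y₂ * (s₂⁻¹ * s₁ * x₂ * t₂⁻¹ - (s₂⁻¹ - t₂⁻¹)) * (s₁ * x₁) := by noncomm_ring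
      _ = 0 := by rw [key, sub_self, mul_zero, zero_mul]
  · calc _ = -(y₂ * (s₂⁻¹ * s₁ * x₂ * t₂⁻¹ - (s₂⁻¹ - t₂⁻¹))) := by noncomm_ring
      _ = 0 := by rw [key, sub_self, mul_zero, neg_zero]
  · calc _ = y₂ * (s₂⁻¹ * s₁ * x₂ * t₂⁻¹ - (s₂⁻¹ - t₂⁻¹)) * (s₃ + s₁ * x₃) := by noncomm_ring
      _ = 0 := by rw [key, sub_self, mul_zero, zero_mul]

theorem divRow2_sub (p p' q : D × D × D) :
    divRow2 (p - p') q = divRow2 p q - divRow2 p' q := by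
  simp only [divRow2, Prod.fst_sub, Prod.snd_sub, Prod.mk_sub_mk, Prod.mk.injEq]
  refine ⟨?_, ?_, ?_⟩ <;> noncomm_ring

theorem divRow2_smul (c : D) (p q : D × D × D) : divRow2 (c • p) q = c • divRow2 p q := by
  simp only [divRow2, Prod.smul_fst, Prod.smul_snd, Prod.smul_mk, smul_eq_mul, Prod.mk.injEq]
  refine ⟨?_, ?_, ?_⟩ <;> noncomm_ring

theorem divRow2_mk_zero_zero (w : D) (q : D × D × D) : divRow2 (w, 0, 0) q = (w, 0, 0) := by
  simp [divRow2]

theorem mul_sub_eq_of_add_mul_eq {c d w v a w' v' a' : D} (hv : v ≠ 0) (hv' : v' ≠ 0)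
    (h : c * w + d * v = a) (h' : c * w' + d * v' = a') :
    c * (w' * v'⁻¹ - w * v⁻¹) = a' * v'⁻¹ - a * v⁻¹ := by
  subst h h'
  simp only [add_mul, mul_assoc d, mul_inv_cancel₀ hv, mul_inv_cancel₀ hv', mul_one]
  noncomm_ring

section phiIRow

variable {a p q : D × D × D}

theorem phiIRow_coeffs_unique (h : RegularRows p q) {c d : D}
    (h₂ : c * p.2.1 + d * q.2.1 = a.2.1) (h₃ : c * p.2.2 + d * q.2.2 = a.2.2) :
    c = (phiIRow a p q).2.1 ∧ d = (phiIRow a p q).2.2 := by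
  obtain ⟨hp₂, hp₃, hq₂, hq₃, hP, hQ⟩ := h
  have hc := (eq_mul_inv_iff_mul_eq₀ hP).2 (mul_sub_eq_of_add_mul_eq hq₂ hq₃ h₂ h₃)
  rw [add_comm] at h₂ h₃
  exact ⟨hc, (eq_mul_inv_iff_mul_eq₀ hQ).2 (mul_sub_eq_of_add_mul_eq hp₃ hp₂ h₃ h₂)⟩

theorem phiIRow_coeffs_spec (h : RegularRows p q) :
    (phiIRow a p q).2.1 * p.2.1 + (phiIRow a p q).2.2 * q.2.1 = a.2.1 ∧
      (phiIRow a p q).2.1 * p.2.2 + (phiIRow a p q).2.2 * q.2.2 = a.2.2 := by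
  set c := (phiIRow a p q).2.1
  have ⟨_, _, hq₂, hq₃, hP, _⟩ := h
  -- `d` solves the first equation by construction; uniqueness identifies it with the formula
  set d := (a.2.1 - c * p.2.1) * q.2.1⁻¹
  have h₂ : c * p.2.1 + d * q.2.1 = a.2.1 := by
    rw [inv_mul_cancel_right₀ hq₂, add_sub_cancel]
  have hc : c * (p.2.2 * q.2.2⁻¹ - p.2.1 * q.2.1⁻¹) = a.2.2 * q.2.2⁻¹ - a.2.1 * q.2.1⁻¹ :=
    inv_mul_cancel_right₀ hP _
  have h₃ : c * p.2.2 + d * q.2.2 = a.2.2 :=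
    calc c * p.2.2 + d * q.2.2
        = c * (p.2.2 * q.2.2⁻¹ - p.2.1 * q.2.1⁻¹) * q.2.2 + a.2.1 * q.2.1⁻¹ * q.2.2 := by
          simp only [d, mul_sub, sub_mul, mul_assoc, inv_mul_cancel₀ hq₃, mul_one]
          noncomm_ring
      _ = a.2.2 := by rw [hc, sub_mul, inv_mul_cancel_right₀ hq₃, sub_add_cancel]
  obtain ⟨-, hd⟩ := phiIRow_coeffs_unique h h₂ h₃
  rw [← hd]
  exact ⟨h₂, h₃⟩

theorem phiIRow_eq_iff (h : RegularRows p q) {w c d : D} :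
    phiIRow a p q = (w, c, d) ↔ a - c • p - d • q = (w, 0, 0) := by
  have hsys : a - c • p - d • q = (w, 0, 0) ↔ a.1 - c * p.1 - d * q.1 = w ∧
      c * p.2.1 + d * q.2.1 = a.2.1 ∧ c * p.2.2 + d * q.2.2 = a.2.2 := by
    simp only [Prod.ext_iff, Prod.fst_sub, Prod.snd_sub, Prod.fst_add, Prod.snd_add, Prod.smul_fst,
      Prod.smul_snd, smul_eq_mul, sub_eq_zero, sub_sub, eq_comm (a := a.2.1), eq_comm (a := a.2.2)]
  rw [hsys]
  constructor
  · intro he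
    simp only [phiIRow, Prod.mk.injEq] at he
    obtain ⟨rfl, rfl, rfl⟩ := he
    exact ⟨rfl, phiIRow_coeffs_spec h⟩
  · rintro ⟨rfl, h₂, h₃⟩
    obtain ⟨rfl, rfl⟩ := phiIRow_coeffs_unique h h₂ h₃
    rfl

theorem phiIRow_divRow2 (t : D × D × D) (hpq : RegularRows p q)
    (ht : RegularRows (divRow2 p t) (divRow2 q t)) :
    phiIRow (divRow2 a t) (divRow2 p t) (divRow2 q t) = phiIRow a p q := by
  rcases hw : phiIRow a p q with ⟨w, c, d⟩
  rw [phiIRow_eq_iff hpq] at hw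
  rw [phiIRow_eq_iff ht, ← divRow2_smul, ← divRow2_smul, ← divRow2_sub, ← divRow2_sub, hw,
    divRow2_mk_zero_zero]

end phiIRow

theorem entwining_pentagon_phi_general (x y z : D × D × D × D × D × D)
    (hL1 : regIII y z)
    (hL2 : regII (map23 phiIII (x, y, z)).1 (map23 phiIII (x, y, z)).2.2)
    (hL3 : regI (map13 phiII (map23 phiIII (x, y, z))).1
             (map13 phiII (map23 phiIII (x, y, z))).2.1)
    (hR1 : regI x y) :
    map12 phiI (map13 phiII (map23 phiIII (x, y, z))) =
      map23 phiIII (map12 phiI (x, y, z)) := by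
  obtain ⟨xa, xb, rfl⟩ := exists_ofRows_eq x
  obtain ⟨ya, yb, rfl⟩ := exists_ofRows_eq y
  obtain ⟨za, zb, rfl⟩ := exists_ofRows_eq z
  simp only [map12, map13, map23, phiI_ofRows, phiII_ofRows, phiIII_ofRows, regI_ofRows,
    regII_ofRows, regIII_ofRows] at *
  rw [mulRow1_divRow2 hL1 hL2, mulRow1_divRow2 hL1 hL2] at hL3 ⊢
  rw [mulRows13_mulRow1, phiIRow_divRow2 _ hR1 hL3]

/-- The maps `φ^{1,{2,3}}`, `φ^{1,2}` and `φ^{{1,3},2}` satisfy the entwining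
(non-constant) Pentagon relation, wherever all the inverses taken on either side are
inverses of nonzero elements. -/
theorem entwining_pentagon_phi (x y z : D × D × D × D × D × D)
    (hL1 : regIII y z)
    (hL2 : regII (map23 phiIII (x, y, z)).1 (map23 phiIII (x, y, z)).2.2)
    (hL3 : regI (map13 phiII (map23 phiIII (x, y, z))).1
             (map13 phiII (map23 phiIII (x, y, z))).2.1)
    (hR1 : regI x y)
    (hR2 : regIII (map12 phiI (x, y, z)).2.1 (map12 phiI (x, y, z)).2.2) :
    map12 phiI (map13 phiII (map23 phiIII (x, y, z))) =
      map23 phiIII (map12 phiI (x, y, z)) :=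
  entwining_pentagon_phi_general x y z hL1 hL2 hL3 hR1
end
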